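/- arXiv:2603.16492 — 7 statements merged into one kernel-verified Lean document; each statement's English description precedes it below -/
import Mathlib

section
/- For every natural number N ≥ 1 and every unitary matrix U of size 2N×2N over ℂ, written in 2×2 block form with N×N blocks, there exist N×N unitary matrices M₁, M₂, L, N' such that U = fromBlocks M₁ 0 0 M₂ · Ĥ · fromBlocks 1 0 0 L · Ĥ · fromBlocks 1 0 0 N', where Ĥ = (1/√2) · fromBlocks 1 1 1 (−1) (the Hadamard gate tensored with the N×N identity). -/
open Matrix

variable {n : Type*} [Fintype n] [DecidableEq n]

lemma exists_unitary_mul_eq (P Q : Matrix n n ℂ) (h : Pᴴ * P = Qᴴ * Q) :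
    ∃ W ∈ Matrix.unitaryGroup n ℂ, Q = W * P := by
  classical
  set E := EuclideanSpace ℂ n
  let p : E →ₗ[ℂ] E := Matrix.toEuclideanLin P
  let q : E →ₗ[ℂ] E := Matrix.toEuclideanLin Q
  have hmul : ∀ (A B : Matrix n n ℂ) (x : E), Matrix.toEuclideanLin (A * B) x
      = Matrix.toEuclideanLin A (Matrix.toEuclideanLin B x) := by
    intro A B x
    apply (WithLp.equiv 2 (n → ℂ)).injective
    simp only [WithLp.equiv_apply, Matrix.ofLp_toEuclideanLin_apply, Matrix.mulVec_mulVec]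
  have hnorm : ∀ x : E, ‖q x‖ = ‖p x‖ := by
    intro x
    have hinner : inner ℂ (p x) (p x) = inner ℂ (q x) (q x) := by
      have h1 : inner ℂ (p x) (p x) = inner ℂ x (Matrix.toEuclideanLin (Pᴴ * P) x) := by
        rw [hmul Pᴴ P x]
        rw [Matrix.toEuclideanLin_conjTranspose_eq_adjoint, LinearMap.adjoint_inner_right]
      have h2 : inner ℂ (q x) (q x) = inner ℂ x (Matrix.toEuclideanLin (Qᴴ * Q) x) := by
        rw [hmul Qᴴ Q x]
        rw [Matrix.toEuclideanLin_conjTranspose_eq_adjoint, LinearMap.adjoint_inner_right]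
      rw [h1, h2, h]
    rw [inner_self_eq_norm_sq_to_K (𝕜 := ℂ), inner_self_eq_norm_sq_to_K (𝕜 := ℂ)] at hinner
    have h2 : (‖p x‖ : ℝ) ^ 2 = (‖q x‖ : ℝ) ^ 2 := by
      exact_mod_cast hinner
    nlinarith [norm_nonneg (p x), norm_nonneg (q x)]
  have hker : LinearMap.ker p ≤ LinearMap.ker q := by
    intro x hx
    rw [LinearMap.mem_ker] at hx ⊢
    have h0 := hnorm x
    rw [hx, norm_zero] at h0
    exact norm_eq_zero.mp h0
  let L0 : LinearMap.range p →ₗ[ℂ] E :=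
    ((LinearMap.ker p).liftQ q hker).comp p.quotKerEquivRange.symm.toLinearMap
  have hL0 : ∀ x : E, L0 ⟨p x, LinearMap.mem_range_self p x⟩ = q x := by
    intro x
    have h1 : p.quotKerEquivRange.symm ⟨p x, LinearMap.mem_range_self p x⟩
        = Submodule.Quotient.mk x := by
      apply p.quotKerEquivRange.injective
      simp [LinearMap.quotKerEquivRange_apply_mk]
    simp [L0, h1]
  have hL0norm : ∀ s : LinearMap.range p, ‖L0 s‖ = ‖s‖ := by
    rintro ⟨-, x, rfl⟩
    rw [hL0 x]
    exact (hnorm x).trans rfl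
  let LIso : LinearMap.range p →ₗᵢ[ℂ] E := ⟨L0, hL0norm⟩
  let W := LIso.extend
  have hW : ∀ x : E, W (p x) = q x := by
    intro x
    exact (LIso.extend_apply ⟨p x, LinearMap.mem_range_self p x⟩).trans (hL0 x)
  let Wmat : Matrix n n ℂ := Matrix.toEuclideanLin.symm W.toLinearMap
  have hWmat : ∀ x : E, Matrix.toEuclideanLin Wmat x = W x := by
    intro x
    rw [show Matrix.toEuclideanLin Wmat = W.toLinearMap from
      Matrix.toEuclideanLin.apply_symm_apply _]
    rfl
  have hQ : Q = Wmat * P := by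
    apply Matrix.toEuclideanLin.injective
    apply LinearMap.ext
    intro x
    rw [hmul Wmat P x, hWmat, hW x]
  have hone : (Wmatᴴ * Wmat) = 1 := by
    apply Matrix.toEuclideanLin.injective
    apply LinearMap.ext
    intro x
    rw [hmul Wmatᴴ Wmat x, Matrix.toEuclideanLin_conjTranspose_eq_adjoint, hWmat]
    apply ext_inner_left ℂ
    intro v
    rw [LinearMap.adjoint_inner_right, hWmat v, W.inner_map_map]
    congr 1
    apply (WithLp.equiv 2 (n → ℂ)).injective
    simp only [WithLp.equiv_apply, Matrix.ofLp_toEuclideanLin_apply, Matrix.one_mulVec]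
  refine ⟨Wmat, ?_, hQ⟩
  rw [Matrix.mem_unitaryGroup_iff, Matrix.star_eq_conjTranspose, mul_eq_one_comm]
  exact hone

lemma exists_unitary_polar (M S : Matrix n n ℂ) (hS : Sᴴ = S) (h : S * S = M * Mᴴ) :
    ∃ B ∈ Matrix.unitaryGroup n ℂ, M = S * B := by
  obtain ⟨W, hW, hQ⟩ := exists_unitary_mul_eq Sᴴ Mᴴ
    (by rw [conjTranspose_conjTranspose, hS, h, conjTranspose_conjTranspose])
  refine ⟨Wᴴ, ?_, ?_⟩
  · rw [← Matrix.star_eq_conjTranspose]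
    exact Unitary.star_mem hW
  · have h2 := congrArg conjTranspose hQ
    rw [conjTranspose_conjTranspose, conjTranspose_mul, conjTranspose_conjTranspose] at h2
    exact h2

open scoped ComplexOrder in
lemma exists_CS (U11 U12 : Matrix n n ℂ) (h : U11 * U11ᴴ + U12 * U12ᴴ = 1) :
    ∃ C S A B : Matrix n n ℂ, Cᴴ = C ∧ Sᴴ = S ∧ C * S = S * C ∧ C * C + S * S = 1 ∧
      A ∈ Matrix.unitaryGroup n ℂ ∧ B ∈ Matrix.unitaryGroup n ℂ ∧
      U11 = C * A ∧ U12 = S * B := by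
  classical
  set H := U11 * U11ᴴ with hHdef
  have hH : H.IsHermitian := Matrix.isHermitian_mul_conjTranspose_self U11
  set d := hH.eigenvalues with hddef
  have hd0 : ∀ i, 0 ≤ d i := (Matrix.posSemidef_self_mul_conjTranspose U11).eigenvalues_nonneg
  have h1H : (1 : Matrix n n ℂ) - H = U12 * U12ᴴ := by rw [← h]; abel
  have hpsd : ((1 : Matrix n n ℂ) - H).PosSemidef := by
    rw [h1H]; exact Matrix.posSemidef_self_mul_conjTranspose U12
  have hd1 : ∀ i, d i ≤ 1 := by
    intro i
    have hv := hH.mulVec_eigenvectorBasis i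
    have h2 := hpsd.dotProduct_mulVec_nonneg ⇑(hH.eigenvectorBasis i)
    rw [Matrix.sub_mulVec, Matrix.one_mulVec, hv] at h2
    have hvv : dotProduct (star ⇑(hH.eigenvectorBasis i)) ⇑(hH.eigenvectorBasis i)
        = 1 := by
      have := EuclideanSpace.inner_eq_star_dotProduct (hH.eigenvectorBasis i)
        (hH.eigenvectorBasis i)
      rw [inner_self_eq_norm_sq_to_K (𝕜 := ℂ), hH.eigenvectorBasis.orthonormal.1 i] at this
      simpa [dotProduct_comm] using this.symm
    rw [dotProduct_sub, dotProduct_smul, hvv] at h2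
    have h3 : (0 : ℂ) ≤ ((1 - d i : ℝ) : ℂ) := by
      convert h2 using 1
      push_cast [Complex.real_smul]
      ring
    rw [Complex.zero_le_real] at h3
    linarith
  set V := (hH.eigenvectorUnitary : Matrix n n ℂ) with hVdef
  have hV1 : V * Vᴴ = 1 := by
    rw [← Matrix.star_eq_conjTranspose]
    exact Matrix.mem_unitaryGroup_iff.mp hH.eigenvectorUnitary.2
  have hV2 : Vᴴ * V = 1 := by
    rw [← Matrix.star_eq_conjTranspose]
    exact Matrix.mem_unitaryGroup_iff'.mp hH.eigenvectorUnitary.2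
  set C := V * Matrix.diagonal (fun i => (Real.sqrt (d i) : ℂ)) * Vᴴ with hCdef
  set S := V * Matrix.diagonal (fun i => (Real.sqrt (1 - d i) : ℂ)) * Vᴴ with hSdef
  have hconj : ∀ f : n → ℝ, (V * Matrix.diagonal (fun i => (f i : ℂ)) * Vᴴ)ᴴ
      = V * Matrix.diagonal (fun i => (f i : ℂ)) * Vᴴ := by
    intro f
    have hst : (star fun i => ((f i : ℝ) : ℂ)) = fun i => ((f i : ℝ) : ℂ) := by
      funext i
      simp [Complex.conj_ofReal]
    simp [Matrix.conjTranspose_mul, Matrix.diagonal_conjTranspose, hst, mul_assoc]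
  have hmulCS : ∀ f g : n → ℝ,
      (V * Matrix.diagonal (fun i => (f i : ℂ)) * Vᴴ) *
      (V * Matrix.diagonal (fun i => (g i : ℂ)) * Vᴴ)
      = V * Matrix.diagonal (fun i => ((f i * g i : ℝ) : ℂ)) * Vᴴ := by
    intro f g
    calc (V * Matrix.diagonal (fun i => (f i : ℂ)) * Vᴴ) *
        (V * Matrix.diagonal (fun i => (g i : ℂ)) * Vᴴ)
        = V * (Matrix.diagonal (fun i => (f i : ℂ)) * (Vᴴ * V) *
            Matrix.diagonal (fun i => (g i : ℂ))) * Vᴴ := by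
          simp only [mul_assoc]
      _ = V * Matrix.diagonal (fun i => ((f i * g i : ℝ) : ℂ)) * Vᴴ := by
          rw [hV2, mul_one, Matrix.diagonal_mul_diagonal]
          push_cast
          rfl
  have hCherm : Cᴴ = C := hconj _
  have hSherm : Sᴴ = S := hconj _
  have hspec : V * Matrix.diagonal (fun i => ((d i : ℝ) : ℂ)) * Vᴴ = H := by
    conv_rhs => rw [hH.spectral_theorem]
    simp only [Matrix.star_eq_conjTranspose, Function.comp_def]
    rfl
  have hCS : C * S = S * C := by
    rw [hCdef, hSdef, hmulCS, hmulCS,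
      show (fun i => ((Real.sqrt (d i) * Real.sqrt (1 - d i) : ℝ) : ℂ))
        = (fun i => ((Real.sqrt (1 - d i) * Real.sqrt (d i) : ℝ) : ℂ)) from by
          funext i; rw [mul_comm]]
  have hCC : C * C = H := by
    rw [hCdef, hmulCS]
    have : (fun i => ((Real.sqrt (d i) * Real.sqrt (d i) : ℝ) : ℂ))
        = fun i => ((d i : ℝ) : ℂ) := by
      ext i
      rw [Real.mul_self_sqrt (hd0 i)]
    rw [this, hspec]
  have hSS : S * S = (1 : Matrix n n ℂ) - H := by
    rw [hSdef, hmulCS]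
    have : (fun i => ((Real.sqrt (1 - d i) * Real.sqrt (1 - d i) : ℝ) : ℂ))
        = fun i => ((1 - d i : ℝ) : ℂ) := by
      ext i
      rw [Real.mul_self_sqrt (by linarith [hd1 i])]
    rw [this]
    have hdiag : Matrix.diagonal (fun i => ((1 - d i : ℝ) : ℂ))
        = 1 - Matrix.diagonal (fun i => ((d i : ℝ) : ℂ)) := by
      ext i j
      rcases eq_or_ne i j with rfl | hij
      · simp only [Matrix.diagonal_apply_eq, Matrix.sub_apply, Matrix.one_apply_eq]
        push_cast
        ring
      · simp [Matrix.diagonal_apply_ne _ hij, Matrix.one_apply_ne hij]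
    rw [hdiag, mul_sub, sub_mul, mul_one, hV1, hspec]
  obtain ⟨A, hA, hU11⟩ := exists_unitary_polar U11 C hCherm (by rw [hCC])
  obtain ⟨B, hB, hU12⟩ := exists_unitary_polar U12 S hSherm (by rw [hSS, h1H])
  exact ⟨C, S, A, B, hCherm, hSherm, hCS, by rw [hCC, hSS]; abel, hA, hB, hU11, hU12⟩

theorem block_ZXZ_decomposition (N : ℕ) (hN : 1 ≤ N)
    (U : Matrix (Fin N ⊕ Fin N) (Fin N ⊕ Fin N) ℂ)
    (hU : U ∈ Matrix.unitaryGroup (Fin N ⊕ Fin N) ℂ) :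
    ∃ M₁ M₂ L N' : Matrix (Fin N) (Fin N) ℂ,
      M₁ ∈ Matrix.unitaryGroup (Fin N) ℂ ∧
      M₂ ∈ Matrix.unitaryGroup (Fin N) ℂ ∧
      L ∈ Matrix.unitaryGroup (Fin N) ℂ ∧
      N' ∈ Matrix.unitaryGroup (Fin N) ℂ ∧
      U = Matrix.fromBlocks M₁ 0 0 M₂ *
          ((Real.sqrt 2 : ℂ)⁻¹ • Matrix.fromBlocks 1 1 1 (-1)) *
          Matrix.fromBlocks 1 0 0 L *
          ((Real.sqrt 2 : ℂ)⁻¹ • Matrix.fromBlocks 1 1 1 (-1)) *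
          Matrix.fromBlocks 1 0 0 N' := by
  classical
  have hUU : U * Uᴴ = 1 := by
    rw [← Matrix.star_eq_conjTranspose]; exact Matrix.mem_unitaryGroup_iff.mp hU
  have hUU' : Uᴴ * U = 1 := by
    rw [← Matrix.star_eq_conjTranspose]; exact Matrix.mem_unitaryGroup_iff'.mp hU
  set U11 := U.toBlocks₁₁ with hU11def
  set U12 := U.toBlocks₁₂ with hU12def
  set U21 := U.toBlocks₂₁ with hU21def
  set U22 := U.toBlocks₂₂ with hU22def
  have hUb : U = Matrix.fromBlocks U11 U12 U21 U22 := (Matrix.fromBlocks_toBlocks U).symm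
  have hrow := hUU
  rw [hUb, Matrix.fromBlocks_conjTranspose, Matrix.fromBlocks_multiply,
    ← Matrix.fromBlocks_one (l := Fin N) (m := Fin N) (α := ℂ), Matrix.fromBlocks_inj] at hrow
  have hcol := hUU'
  rw [hUb, Matrix.fromBlocks_conjTranspose, Matrix.fromBlocks_multiply,
    ← Matrix.fromBlocks_one (l := Fin N) (m := Fin N) (α := ℂ), Matrix.fromBlocks_inj] at hcol
  obtain ⟨r11, r12, r21, r22⟩ := hrow
  obtain ⟨c11, c12, c21, c22⟩ := hcol
  obtain ⟨C, S, A, B, hCh, hSh, hCS, hCS1, hA, hB, h11, h12⟩ := exists_CS U11 U12 r11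
  clear hU hUU hUU' r12 r22 c21
  -- basic unitary facts
  have hA1 : A * Aᴴ = 1 := by
    rw [← Matrix.star_eq_conjTranspose]; exact Matrix.mem_unitaryGroup_iff.mp hA
  have hA2 : Aᴴ * A = 1 := by
    rw [← Matrix.star_eq_conjTranspose]; exact Matrix.mem_unitaryGroup_iff'.mp hA
  have hB1 : B * Bᴴ = 1 := by
    rw [← Matrix.star_eq_conjTranspose]; exact Matrix.mem_unitaryGroup_iff.mp hB
  have hB2 : Bᴴ * B = 1 := by
    rw [← Matrix.star_eq_conjTranspose]; exact Matrix.mem_unitaryGroup_iff'.mp hB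
  have hAAX : ∀ X : Matrix (Fin N) (Fin N) ℂ, A * (Aᴴ * X) = X := fun X => by
    rw [← mul_assoc, hA1, one_mul]
  have hBBX : ∀ X : Matrix (Fin N) (Fin N) ℂ, B * (Bᴴ * X) = X := fun X => by
    rw [← mul_assoc, hB1, one_mul]
  have hB'BX : ∀ X : Matrix (Fin N) (Fin N) ℂ, Bᴴ * (B * X) = X := fun X => by
    rw [← mul_assoc, hB2, one_mul]
  have hCSX : ∀ X : Matrix (Fin N) (Fin N) ℂ, C * (S * X) = S * (C * X) := fun X => by
    rw [← mul_assoc, hCS, mul_assoc]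
  have hCS1X : ∀ X : Matrix (Fin N) (Fin N) ℂ, C * (C * X) + S * (S * X) = X := fun X => by
    rw [← mul_assoc, ← mul_assoc, ← add_mul, hCS1, one_mul]
  -- conjTransposes of the blocks
  have hU11c : U11ᴴ = Aᴴ * C := by rw [h11, Matrix.conjTranspose_mul, hCh]
  have hU12c : U12ᴴ = Bᴴ * S := by rw [h12, Matrix.conjTranspose_mul, hSh]
  -- the key relation from row orthogonality
  have hrelX : ∀ X : Matrix (Fin N) (Fin N) ℂ,
      U21 * (Aᴴ * (C * X)) = -(U22 * (Bᴴ * (S * X))) := by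
    intro X
    have h0 := congrArg (fun Y => Y * X) r21
    simp only [add_mul, zero_mul, hU11c, hU12c, mul_assoc] at h0
    exact eq_neg_of_add_eq_zero_left h0
  -- column relations rewritten
  have hc11 : U21ᴴ * U21 = 1 - Aᴴ * (C * (C * A)) := by
    have h0 : U11ᴴ * U11 = Aᴴ * (C * (C * A)) := by
      rw [hU11c, h11]
      simp only [mul_assoc]
    rw [← h0, ← c11]
    abel
  have hc22 : U22ᴴ * U22 = 1 - Bᴴ * (S * (S * B)) := by
    have h0 : U12ᴴ * U12 = Bᴴ * (S * (S * B)) := by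
      rw [hU12c, h12]
      simp only [mul_assoc]
    rw [← h0, ← c22]
    abel
  have hc12 : U21ᴴ * U22 = -(Aᴴ * (C * (S * B))) := by
    have h0 : U11ᴴ * U12 = Aᴴ * (C * (S * B)) := by
      rw [hU11c, h12]
      simp only [mul_assoc]
    rw [← h0]
    exact eq_neg_of_add_eq_zero_right c12
  have hc12' : U22ᴴ * U21 = -(Bᴴ * (S * (C * A))) := by
    have h0 := congrArg Matrix.conjTranspose hc12
    simp only [Matrix.conjTranspose_mul, Matrix.conjTranspose_neg,
      Matrix.conjTranspose_conjTranspose, hCh, hSh] at h0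
    rw [h0]
    simp only [mul_assoc]
  -- the four matrices
  set P : Matrix (Fin N) (Fin N) ℂ := C - Complex.I • S with hPdef
  set Pb : Matrix (Fin N) (Fin N) ℂ := C + Complex.I • S with hPbdef
  set M₁ : Matrix (Fin N) (Fin N) ℂ := Pb * A with hM1def
  set M₂ : Matrix (Fin N) (Fin N) ℂ := U21 + Complex.I • (U22 * (Bᴴ * A)) with hM2def
  set L : Matrix (Fin N) (Fin N) ℂ := Aᴴ * (P * (P * A)) with hLdef
  set N' : Matrix (Fin N) (Fin N) ℂ := (-Complex.I) • (Aᴴ * B) with hNdef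
  have hPh : Pᴴ = Pb := by
    rw [hPdef, hPbdef]
    simp [Matrix.conjTranspose_smul, hCh, hSh, Complex.conj_I, sub_eq_add_neg]
  have hPbh : Pbᴴ = P := by
    rw [hPdef, hPbdef]
    simp [Matrix.conjTranspose_smul, hCh, hSh, Complex.conj_I, sub_eq_add_neg]
  have hpm : Pb * P = 1 := by
    rw [hPdef, hPbdef]
    have : (C + Complex.I • S) * (C - Complex.I • S)
        = C * C + S * S + (Complex.I • (S * C) - Complex.I • (C * S)) := by
      simp only [add_mul, mul_sub, smul_mul_assoc, mul_smul_comm, smul_smul, smul_add,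
        smul_sub, smul_neg, neg_smul, Complex.I_mul_I, neg_one_smul, sub_neg_eq_add, neg_neg]
      module
    rw [this, hCS, sub_self, add_zero, hCS1]
  have hmp : P * Pb = 1 := by
    rw [hPdef, hPbdef]
    have : (C - Complex.I • S) * (C + Complex.I • S)
        = C * C + S * S + (Complex.I • (C * S) - Complex.I • (S * C)) := by
      simp only [sub_mul, mul_add, smul_mul_assoc, mul_smul_comm, smul_smul, smul_add,
        smul_sub, smul_neg, neg_smul, Complex.I_mul_I, neg_one_smul, sub_neg_eq_add, neg_neg]
      module
    rw [this, hCS, sub_self, add_zero, hCS1]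
  have hmpX : ∀ X : Matrix (Fin N) (Fin N) ℂ, P * (Pb * X) = X := fun X => by
    rw [← mul_assoc, hmp, one_mul]
  have hpmX : ∀ X : Matrix (Fin N) (Fin N) ℂ, Pb * (P * X) = X := fun X => by
    rw [← mul_assoc, hpm, one_mul]
  -- memberships
  have hM1mem : M₁ ∈ Matrix.unitaryGroup (Fin N) ℂ := by
    rw [Matrix.mem_unitaryGroup_iff, Matrix.star_eq_conjTranspose, hM1def,
      Matrix.conjTranspose_mul, hPbh, mul_assoc, hAAX, hpm]
  have hLmem : L ∈ Matrix.unitaryGroup (Fin N) ℂ := by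
    rw [Matrix.mem_unitaryGroup_iff, Matrix.star_eq_conjTranspose, hLdef]
    simp only [Matrix.conjTranspose_mul, Matrix.conjTranspose_conjTranspose, hPh, mul_assoc]
    rw [hAAX, hmpX, hmpX, hA2]
  have hNmem : N' ∈ Matrix.unitaryGroup (Fin N) ℂ := by
    rw [Matrix.mem_unitaryGroup_iff, Matrix.star_eq_conjTranspose, hNdef]
    rw [Matrix.conjTranspose_smul, Matrix.conjTranspose_mul, Matrix.conjTranspose_conjTranspose]
    rw [smul_mul_assoc, mul_smul_comm, smul_smul, mul_assoc, hBBX, hA2]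
    simp [Complex.conj_I]
  -- generalized column relations
  have hc12X : ∀ X : Matrix (Fin N) (Fin N) ℂ,
      U21ᴴ * (U22 * X) = -(Aᴴ * (C * (S * (B * X)))) := fun X => by
    rw [← mul_assoc, hc12]
    simp only [neg_mul, mul_assoc]
  have hc22X : ∀ X : Matrix (Fin N) (Fin N) ℂ,
      U22ᴴ * (U22 * X) = X - Bᴴ * (S * (S * (B * X))) := fun X => by
    rw [← mul_assoc, hc22]
    simp only [sub_mul, one_mul, mul_assoc]
  have hM2mem : M₂ ∈ Matrix.unitaryGroup (Fin N) ℂ := by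
    rw [Matrix.mem_unitaryGroup_iff', Matrix.star_eq_conjTranspose, hM2def]
    simp only [Matrix.conjTranspose_add, Matrix.conjTranspose_smul, Matrix.conjTranspose_mul,
      Matrix.conjTranspose_conjTranspose, Complex.star_def, Complex.conj_I, neg_smul, mul_assoc,
      add_mul, mul_add, smul_mul_assoc, mul_smul_comm, smul_smul, neg_mul, mul_neg,
      smul_add, smul_neg, smul_sub, Complex.I_mul_I, neg_one_smul, neg_neg, sub_neg_eq_add]
    rw [hc11, hc12X, hc12', hc22X]
    simp only [mul_add, mul_sub, mul_neg, mul_one, mul_assoc, smul_add, smul_neg, smul_sub,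
      hBBX, hB'BX, hAAX]
    rw [hA2, show Aᴴ * (C * (C * A)) = 1 - Aᴴ * (S * (S * A)) from
      eq_sub_of_add_eq (by rw [← mul_add, hCS1X A, hA2])]
    rw [hCSX A]
    module
  -- block identities
  have hM1L : M₁ * L = P * A := by
    rw [hM1def, hLdef, mul_assoc, hAAX, hpmX]
  have g11 : M₁ + M₁ * L = (2 : ℂ) • U11 := by
    rw [hM1L, hM1def, hPdef, hPbdef, h11]
    simp only [add_mul, sub_mul, smul_mul_assoc]
    module
  have g12 : (M₁ - M₁ * L) * N' = (2 : ℂ) • U12 := by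
    rw [hM1L, hM1def, hNdef, hPdef, hPbdef, h12]
    simp only [sub_mul, add_mul, smul_mul_assoc, mul_smul_comm, smul_smul, mul_assoc,
      hAAX, mul_neg, neg_mul, Complex.I_mul_I, neg_neg, smul_neg, neg_smul]
    match_scalars <;> (try (ring_nf; simp [Complex.I_sq])) <;> try ring_nf
  have hM2AX : ∀ X : Matrix (Fin N) (Fin N) ℂ,
      M₂ * (Aᴴ * X) = U21 * (Aᴴ * X) + Complex.I • (U22 * (Bᴴ * X)) := fun X => by
    rw [hM2def]
    simp only [add_mul, smul_mul_assoc, mul_assoc, hAAX]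
  have hPPA : P * (P * A) = C * (C * A) - S * (S * A)
      - ((2 : ℂ) * Complex.I) • (C * (S * A)) := by
    rw [hPdef]
    simp only [sub_mul, smul_mul_assoc, mul_sub, mul_smul_comm, smul_smul, smul_sub,
      Complex.I_mul_I, neg_one_smul, neg_neg, neg_smul, sub_neg_eq_add]
    rw [← hCSX A]
    module
  have e1 : U21 = -(U22 * (Bᴴ * (C * (S * A)))) + U21 * (Aᴴ * (S * (S * A))) := by
    have e0 : U21 = U21 * (Aᴴ * (C * (C * A) + S * (S * A))) := by
      rw [hCS1X A, hA2, mul_one]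
    conv_lhs => rw [e0]
    simp only [mul_add]
    rw [hrelX (C * A), ← hCSX A]
  have g21 : M₂ - M₂ * L = (2 : ℂ) • U21 := by
    have hsub : M₂ - M₂ * L = M₂ * (Aᴴ * (A - P * (P * A))) := by
      rw [hLdef, mul_sub, mul_sub, hA2, mul_one]
    have hAPP : A - P * (P * A) = (2 : ℂ) • (S * (S * A))
        + ((2 : ℂ) * Complex.I) • (C * (S * A)) := by
      rw [hPPA]
      nth_rewrite 1 [← hCS1X A]
      module
    rw [hsub, hAPP]
    simp only [mul_add, mul_smul_comm]
    rw [hM2AX (S * (S * A)), hM2AX (C * (S * A)), hrelX (S * A)]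
    conv_rhs => rw [e1]
    simp only [smul_add, smul_smul, smul_neg]
    match_scalars <;> (try (ring_nf; simp [Complex.I_sq])) <;> try ring_nf
  have g22 : (M₂ + M₂ * L) * N' = (2 : ℂ) • U22 := by
    have hsub : M₂ + M₂ * L = M₂ * (Aᴴ * (A + P * (P * A))) := by
      rw [hLdef, mul_add, mul_add, hA2, mul_one]
    have hAPP : A + P * (P * A) = (2 : ℂ) • (C * (C * A))
        - ((2 : ℂ) * Complex.I) • (C * (S * A)) := by
      rw [hPPA]
      nth_rewrite 1 [← hCS1X A]
      module
    have e2 : U22 * (Bᴴ * (C * (C * A))) + U22 * (Bᴴ * (S * (S * A))) = U22 * (Bᴴ * A) := by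
      rw [← mul_add, ← mul_add, hCS1X A]
    have hMpL : M₂ + M₂ * L = ((2 : ℂ) * Complex.I) • (U22 * (Bᴴ * A)) := by
      rw [hsub, hAPP]
      simp only [mul_sub, mul_smul_comm]
      rw [hM2AX (C * (C * A)), hM2AX (C * (S * A)), hrelX (C * A), hrelX (S * A)]
      rw [← hCSX A, ← e2]
      simp only [smul_add, smul_smul, smul_neg, smul_sub]
      match_scalars <;> (try (ring_nf; simp [Complex.I_sq])) <;> try ring_nf
    rw [hMpL, hNdef, smul_mul_assoc, mul_smul_comm, smul_smul,
      show U22 * (Bᴴ * A) * (Aᴴ * B) = U22 from by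
        rw [mul_assoc, mul_assoc, hAAX, hB2, mul_one]]
    match_scalars <;> (try (ring_nf; simp [Complex.I_sq])) <;> try ring_nf
  -- final assembly
  refine ⟨M₁, M₂, L, N', hM1mem, hM2mem, hLmem, hNmem, ?_⟩
  have hbig : Matrix.fromBlocks M₁ 0 0 M₂ * Matrix.fromBlocks 1 1 1 (-1) *
      Matrix.fromBlocks 1 0 0 L * Matrix.fromBlocks 1 1 1 (-1) *
      Matrix.fromBlocks 1 0 0 N' = (2 : ℂ) • U := by
    rw [hUb]
    simp only [Matrix.fromBlocks_multiply, Matrix.fromBlocks_smul, Matrix.mul_zero,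
      Matrix.zero_mul, mul_one, one_mul, mul_zero, zero_mul, add_zero, zero_add,
      mul_neg, neg_mul, mul_neg_one, neg_neg, neg_zero, Matrix.mul_one, Matrix.one_mul,
      zero_sub, sub_neg_eq_add, ← sub_eq_add_neg]
    rw [Matrix.fromBlocks_inj]
    refine ⟨?_, ?_, ?_, ?_⟩
    · exact g11
    · exact g12
    · exact g21
    · exact g22
  have hc2 : ((Real.sqrt 2 : ℝ) : ℂ)⁻¹ * ((Real.sqrt 2 : ℝ) : ℂ)⁻¹ = (2 : ℂ)⁻¹ := by
    have h2 : ((Real.sqrt 2 : ℝ) : ℂ) * ((Real.sqrt 2 : ℝ) : ℂ) = 2 := by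
      norm_cast
      rw [Real.mul_self_sqrt (by norm_num)]
    rw [← mul_inv, h2]
  simp only [Matrix.mul_smul, Matrix.smul_mul, smul_smul]
  rw [hc2, hbig, smul_smul, inv_mul_cancel₀ (two_ne_zero), one_smul]
end

section
/- For every natural number N ≥ 1 and all N×N unitary matrices A₁ and A₂, there exist N×N unitary matrices W and V and a function d : Fin N → ℂ with |d i| = 1 for all i, such that A₁ = W · diagonal d · Vᴴ and A₂ = W · diagonal (fun i => star (d i)) · Vᴴ. -/
set_option maxHeartbeats 1000000 in
open Matrix in

lemma diag_of_eigenbasis {N : ℕ} (M : Matrix (Fin N) (Fin N) ℂ)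
    (b : OrthonormalBasis (Fin N) ℂ (EuclideanSpace ℂ (Fin N))) (e : Fin N → ℂ)
    (hb : ∀ j, M *ᵥ ⇑(b j) = e j • ⇑(b j)) :
    ∃ W ∈ Matrix.unitaryGroup (Fin N) ℂ, M = W * Matrix.diagonal e * Wᴴ := by
  set W : Matrix (Fin N) (Fin N) ℂ :=
    (EuclideanSpace.basisFun (Fin N) ℂ).toBasis.toMatrix b.toBasis with hWdef
  have hWmem : W ∈ Matrix.unitaryGroup (Fin N) ℂ :=
    (EuclideanSpace.basisFun (Fin N) ℂ).toMatrix_orthonormalBasis_mem_unitary b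
  have hWapp : ∀ i j, W i j = b j i := fun i j => rfl
  have hWsingle : ∀ j, W *ᵥ Pi.single j 1 = ⇑(b j) := by
    intro j
    funext i
    simp [mulVec_single, hWapp]
  have hWstar : ∀ j, (star W) *ᵥ ⇑(b j) = Pi.single j 1 := by
    intro j
    rw [← hWsingle, mulVec_mulVec, Matrix.mem_unitaryGroup_iff'.mp hWmem, one_mulVec]
  refine ⟨W, hWmem, ?_⟩
  have key : star W * M * W = diagonal e := by
    apply Matrix.toEuclideanLin.injective
    apply Module.Basis.ext (EuclideanSpace.basisFun (Fin N) ℂ).toBasis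
    intro i
    simp only [toEuclideanLin_apply, OrthonormalBasis.coe_toBasis, EuclideanSpace.basisFun_apply,
      EuclideanSpace.ofLp_single, ← mulVec_mulVec, hWsingle, hb, Matrix.diagonal_mulVec_single,
      mulVec_smul, hWstar, WithLp.toLp_smul, EuclideanSpace.toLp_single, mul_one]
    apply PiLp.ext
    intro j
    simp only [PiLp.smul_apply, EuclideanSpace.single_apply, smul_eq_mul, mul_ite, mul_one,
      mul_zero]
  have hW1 : W * star W = 1 := Matrix.mem_unitaryGroup_iff.mp hWmem
  have hW2 : star W * W = 1 := Matrix.mem_unitaryGroup_iff'.mp hWmem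
  have h3 : W * (star W * M * W) * star W = M := by
    simp only [← mul_assoc]
    rw [hW1, one_mul, mul_assoc, hW1, mul_one]
  rw [key] at h3
  exact h3.symm

set_option maxHeartbeats 1000000 in
open Matrix in

lemma unitary_spectral {N : ℕ} (U : Matrix (Fin N) (Fin N) ℂ)
    (hU : U ∈ Matrix.unitaryGroup (Fin N) ℂ) :
    ∃ (b : OrthonormalBasis (Fin N) ℂ (EuclideanSpace ℂ (Fin N))) (e : Fin N → ℂ),
      (∀ i, ‖e i‖ = 1) ∧ ∀ j, U *ᵥ ⇑(b j) = e j • ⇑(b j) := by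
  classical
  have h1 : U * Uᴴ = 1 := Matrix.mem_unitaryGroup_iff.mp hU
  have h2 : Uᴴ * U = 1 := Matrix.mem_unitaryGroup_iff'.mp hU
  set H : Matrix (Fin N) (Fin N) ℂ := U + Uᴴ with hHdef
  set K : Matrix (Fin N) (Fin N) ℂ := Complex.I • (Uᴴ - U) with hKdef
  have hH : H.IsHermitian := by
    unfold H
    rw [Matrix.IsHermitian, conjTranspose_add, conjTranspose_conjTranspose, add_comm]
  have hK : K.IsHermitian := by
    unfold K
    rw [Matrix.IsHermitian, conjTranspose_smul, conjTranspose_sub, conjTranspose_conjTranspose]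
    simp only [Complex.star_def, Complex.conj_I, neg_smul, smul_sub]
    abel
  have cUU : Commute U Uᴴ := h1.trans h2.symm
  have cHK : H * K = K * H := by
    have a1 : Commute H Uᴴ := cUU.add_left (Commute.refl Uᴴ)
    have a2 : Commute H U := (Commute.refl U).add_left cUU.symm
    exact (a1.sub_right a2).smul_right Complex.I
  have hA : (Matrix.toEuclideanLin H).IsSymmetric := Matrix.isHermitian_iff_isSymmetric.mp hH
  have hB : (Matrix.toEuclideanLin K).IsSymmetric := Matrix.isHermitian_iff_isSymmetric.mp hK
  have hmul : ∀ (X Y : Matrix (Fin N) (Fin N) ℂ),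
      Matrix.toEuclideanLin (X * Y) = Matrix.toEuclideanLin X * Matrix.toEuclideanLin Y := by
    intro X Y
    apply LinearMap.ext
    intro v
    exact congrArg (WithLp.equiv 2 (Fin N → ℂ)).symm (Matrix.mulVec_mulVec v X Y).symm
  have hABcomm : Commute (Matrix.toEuclideanLin H) (Matrix.toEuclideanLin K) := by
    unfold Commute SemiconjBy
    rw [← hmul, ← hmul, cHK]
  have internal := LinearMap.IsSymmetric.directSum_isInternal_of_commute hA hB hABcomm
  have orth := LinearMap.IsSymmetric.orthogonalFamily_eigenspace_inf_eigenspace hA hB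
  set V : ℂ × ℂ → Submodule ℂ (EuclideanSpace ℂ (Fin N)) := fun i =>
    Module.End.eigenspace (Matrix.toEuclideanLin H) i.2 ⊓
      Module.End.eigenspace (Matrix.toEuclideanLin K) i.1 with hVdef
  have hfin : {i : ℂ × ℂ | V i ≠ ⊥}.Finite :=
    Submodule.finite_ne_bot_of_iSupIndep internal.submodule_iSupIndep
  haveI : Fintype {i : ℂ × ℂ // V i ≠ ⊥} := hfin.fintype
  have internal' : DirectSum.IsInternal (fun i : {i : ℂ × ℂ // V i ≠ ⊥} => V i) :=
    DirectSum.isInternal_ne_bot_iff.mpr internal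
  have orth' := orth.comp
    (Subtype.val_injective : Function.Injective (Subtype.val : {i : ℂ × ℂ // V i ≠ ⊥} → ℂ × ℂ))
  have hn : Module.finrank ℂ (EuclideanSpace ℂ (Fin N)) = N := by simp
  set b := internal'.subordinateOrthonormalBasis hn orth' with hbdef
  set p : Fin N → ℂ × ℂ := fun a =>
    (internal'.subordinateOrthonormalBasisIndex hn a orth' : {i : ℂ × ℂ // V i ≠ ⊥}).val with hpdef
  have hmem : ∀ a, b a ∈ V (p a) :=
    fun a => internal'.subordinateOrthonormalBasis_subordinate hn a orth'
  have hHb : ∀ a, H *ᵥ ⇑(b a) = (p a).2 • ⇑(b a) := by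
    intro a
    have := Module.End.mem_eigenspace_iff.mp (hmem a).1
    exact congrArg (WithLp.equiv 2 (Fin N → ℂ)) this
  have hKb : ∀ a, K *ᵥ ⇑(b a) = (p a).1 • ⇑(b a) := by
    intro a
    have := Module.End.mem_eigenspace_iff.mp (hmem a).2
    exact congrArg (WithLp.equiv 2 (Fin N → ℂ)) this
  set e : Fin N → ℂ := fun a => 2⁻¹ * ((p a).2 + Complex.I * (p a).1) with hedef
  have hHK2U : H + Complex.I • K = (2 : ℂ) • U := by
    rw [hHdef, hKdef, smul_smul, Complex.I_mul_I, neg_one_smul, two_smul]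
    abel
  have hUb : ∀ a, U *ᵥ ⇑(b a) = e a • ⇑(b a) := by
    intro a
    have hU2 : U = (2⁻¹ : ℂ) • (H + Complex.I • K) := by
      rw [hHK2U, smul_smul]
      norm_num
    rw [hU2, smul_mulVec, add_mulVec, smul_mulVec, hHb, hKb, hedef]
    rw [smul_smul, smul_add, smul_smul, smul_smul, ← add_smul, ← mul_add]
  have habs : ∀ a, ‖e a‖ = 1 := by
    intro a
    have hv1 : star ⇑(b a) ⬝ᵥ ⇑(b a) = 1 := by
      have h := b.orthonormal.1 a
      have h' := @inner_self_eq_norm_sq_to_K ℂ _ _ _ _ (b a)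
      rw [EuclideanSpace.inner_eq_star_dotProduct, h] at h'
      rw [dotProduct_comm]
      simpa using h'
    have key : star (U *ᵥ ⇑(b a)) ⬝ᵥ (U *ᵥ ⇑(b a)) = star ⇑(b a) ⬝ᵥ ⇑(b a) := by
      rw [star_mulVec, dotProduct_mulVec, vecMul_vecMul, h2, vecMul_one]
    rw [hUb a, star_smul, smul_dotProduct, dotProduct_smul, hv1] at key
    have hconj : (starRingEnd ℂ) (e a) * e a = 1 := by simpa using key
    have hsq : Complex.normSq (e a) = 1 := by
      have h1' : ((Complex.normSq (e a) : ℂ)) = 1 := by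
        rw [← Complex.normSq_eq_conj_mul_self] at hconj
        exact hconj
      exact_mod_cast h1'
    rw [Complex.norm_def, hsq, Real.sqrt_one]
  exact ⟨b, e, habs, hUb⟩

open Matrix in
lemma unitary_spectral_matrix {N : ℕ} (U : Matrix (Fin N) (Fin N) ℂ)
    (hU : U ∈ Matrix.unitaryGroup (Fin N) ℂ) :
    ∃ W ∈ Matrix.unitaryGroup (Fin N) ℂ, ∃ e : Fin N → ℂ,
      (∀ i, ‖e i‖ = 1) ∧ U = W * Matrix.diagonal e * Wᴴ := by
  obtain ⟨b, e, habs, hUb⟩ := unitary_spectral U hU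
  obtain ⟨W, hWmem, hUeq⟩ := diag_of_eigenbasis U b e hUb
  exact ⟨W, hWmem, e, habs, hUeq⟩

open Matrix

theorem multiplexor_demultiplexing (N : ℕ) (hN : 1 ≤ N)
    (A₁ A₂ : Matrix (Fin N) (Fin N) ℂ)
    (h₁ : A₁ ∈ Matrix.unitaryGroup (Fin N) ℂ)
    (h₂ : A₂ ∈ Matrix.unitaryGroup (Fin N) ℂ) :
    ∃ (W V : Matrix (Fin N) (Fin N) ℂ) (d : Fin N → ℂ),
      W ∈ Matrix.unitaryGroup (Fin N) ℂ ∧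
      V ∈ Matrix.unitaryGroup (Fin N) ℂ ∧
      (∀ i, ‖d i‖ = 1) ∧
      A₁ = W * Matrix.diagonal d * Vᴴ ∧
      A₂ = W * Matrix.diagonal (fun i => star (d i)) * Vᴴ := by
  have unitary_spectral := @unitary_spectral_matrix N
  classical
  have hUmem : A₁ * A₂ᴴ ∈ Matrix.unitaryGroup (Fin N) ℂ := by
    rw [← Matrix.star_eq_conjTranspose]
    exact mul_mem h₁ (Unitary.star_mem h₂)
  obtain ⟨W, hWmem, e, habs, hUeq⟩ := unitary_spectral (A₁ * A₂ᴴ) hUmem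
  set d : Fin N → ℂ := fun i => Complex.exp (Complex.I * (Complex.arg (e i) / 2)) with hddef
  have hd2 : ∀ i, d i * d i = e i := by
    intro i
    rw [hddef]
    rw [← Complex.exp_add]
    have harg : Complex.I * (↑(Complex.arg (e i)) / 2) + Complex.I * (↑(Complex.arg (e i)) / 2)
        = ↑(Complex.arg (e i)) * Complex.I := by ring
    rw [harg]
    conv_rhs => rw [← Complex.norm_mul_exp_arg_mul_I (e i)]
    rw [habs i, Complex.ofReal_one, one_mul]
  have hdabs : ∀ i, ‖d i‖ = 1 := by
    intro i
    rw [hddef, Complex.norm_exp]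
    norm_num [Complex.mul_re]
  have hdstar : ∀ i, star (d i) * d i = 1 := by
    intro i
    rw [Complex.star_def, ← Complex.normSq_eq_conj_mul_self, ← Complex.sq_norm, hdabs i]
    norm_num
  have hdd1 : Matrix.diagonal (fun i => star (d i)) * Matrix.diagonal d = 1 := by
    rw [Matrix.diagonal_mul_diagonal,
      show (fun i => star (d i) * d i) = fun _ => (1 : ℂ) from funext hdstar, Matrix.diagonal_one]
  have hde : Matrix.diagonal e = Matrix.diagonal d * Matrix.diagonal d := by
    rw [Matrix.diagonal_mul_diagonal]
    exact congrArg _ (funext fun i => (hd2 i).symm)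
  have hDmem : Matrix.diagonal d ∈ Matrix.unitaryGroup (Fin N) ℂ := by
    rw [Matrix.mem_unitaryGroup_iff']
    rw [Matrix.star_eq_conjTranspose, Matrix.diagonal_conjTranspose]
    exact hdd1
  have hVH : (A₂ᴴ * W * (Matrix.diagonal d)ᴴ)ᴴ = Matrix.diagonal d * (Wᴴ * A₂) := by
    rw [conjTranspose_mul, conjTranspose_mul, conjTranspose_conjTranspose,
      conjTranspose_conjTranspose]
  have hW1 : W * Wᴴ = 1 := Matrix.mem_unitaryGroup_iff.mp hWmem
  have hA2 : A₂ᴴ * A₂ = 1 := Matrix.mem_unitaryGroup_iff'.mp h₂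
  refine ⟨W, A₂ᴴ * W * (Matrix.diagonal d)ᴴ, d, hWmem, ?_, hdabs, ?_, ?_⟩
  · rw [← Matrix.star_eq_conjTranspose, ← Matrix.star_eq_conjTranspose]
    exact mul_mem (mul_mem (Unitary.star_mem h₂) hWmem) (Unitary.star_mem hDmem)
  · rw [hVH]
    calc A₁ = A₁ * A₂ᴴ * A₂ := by rw [mul_assoc, hA2, mul_one]
      _ = W * Matrix.diagonal e * Wᴴ * A₂ := by rw [hUeq]
      _ = W * (Matrix.diagonal d * Matrix.diagonal d) * Wᴴ * A₂ := by rw [← hde]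
      _ = W * Matrix.diagonal d * (Matrix.diagonal d * (Wᴴ * A₂)) := by
          simp only [mul_assoc]
  · rw [hVH]
    have h : W * Matrix.diagonal (fun i => star (d i)) * (Matrix.diagonal d * (Wᴴ * A₂)) = A₂ := by
      rw [mul_assoc, ← mul_assoc (Matrix.diagonal fun i => star (d i)), hdd1, one_mul,
        ← mul_assoc, hW1, one_mul]
    exact h.symm
end

section
/- Let M ≥ 1 and let Δ and D be diagonal 2M×2M complex matrices (indexed by Fin M ⊕ Fin M). Let P₀ = fromBlocks 1 0 0 0 and P₁ = fromBlocks 0 0 0 1 be the 2M×2M diagonal projections (with M×M blocks), and let G = fromBlocks P₀ P₁ P₁ P₀ be the 4M×4M matrix of the C-NOT whose target is the top qubit. Then the 4M×4M matrix I₂ ⊗ Δ = fromBlocks Δ 0 0 Δ commutes with the product (fromBlocks D 0 0 Dᴴ) · G. -/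
open Matrix

theorem diagonal_matrix_migration (M : ℕ) (hM : 1 ≤ M)
    (Δ D : Matrix (Fin M ⊕ Fin M) (Fin M ⊕ Fin M) ℂ)
    (hΔ : Δ.IsDiag) (hD : D.IsDiag) :
    Commute (Matrix.fromBlocks Δ 0 0 Δ)
      (Matrix.fromBlocks D 0 0 Dᴴ *
        Matrix.fromBlocks (Matrix.fromBlocks 1 0 0 0) (Matrix.fromBlocks 0 0 0 1)
          (Matrix.fromBlocks 0 0 0 1) (Matrix.fromBlocks 1 0 0 0)) := by
  obtain ⟨dΔ, rfl⟩ : ∃ d, Matrix.diagonal d = Δ := ⟨Δ.diag, hΔ.diagonal_diag⟩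
  obtain ⟨dD, rfl⟩ : ∃ d, Matrix.diagonal d = D := ⟨D.diag, hD.diagonal_diag⟩
  have hP0 : (Matrix.fromBlocks 1 0 0 0 : Matrix (Fin M ⊕ Fin M) (Fin M ⊕ Fin M) ℂ)
      = Matrix.diagonal (Sum.elim 1 0) := by
    ext i j; rcases i with i|i <;> rcases j with j|j <;>
      simp [Matrix.diagonal_apply, Matrix.one_apply, Sum.inl.injEq, Sum.inr.injEq]
  have hP1 : (Matrix.fromBlocks 0 0 0 1 : Matrix (Fin M ⊕ Fin M) (Fin M ⊕ Fin M) ℂ)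
      = Matrix.diagonal (Sum.elim 0 1) := by
    ext i j; rcases i with i|i <;> rcases j with j|j <;>
      simp [Matrix.diagonal_apply, Matrix.one_apply, Sum.inl.injEq, Sum.inr.injEq]
  rw [hP0, hP1, Matrix.diagonal_conjTranspose]
  unfold Commute SemiconjBy
  simp only [Matrix.fromBlocks_multiply, Matrix.mul_zero, Matrix.zero_mul, add_zero,
    zero_add, Matrix.diagonal_mul_diagonal]
  congr 1 <;> · congr 1; funext i; cases i <;> simp [mul_comm]
end

section
/- Let E = (1/√2) · !![1, i, 0, 0; 0, 0, i, 1; 0, 0, i, −1; 1, −i, 0, 0] and let σ = σ_y ⊗ₖ σ_y where σ_y = !![0, −i; i, 0]. Then for every 4×4 complex matrix u, the characteristic polynomial of γ(u) := u · σ · uᵀ · σ equals the characteristic polynomial of (Eᴴ · u · E) · (Eᴴ · u · E)ᵀ. -/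
open Matrix Complex
open scoped Kronecker

/-- The identification of `Fin 2 × Fin 2` with `Fin 4` placing the first factor
as the most significant (top) qubit: `(a, b) ↦ 2 * a + b`. -/
def qubitEquiv : Fin 2 × Fin 2 ≃ Fin 4 := finProdFinEquiv

/-- The magic-basis matrix `E`. -/
noncomputable def magicE : Matrix (Fin 4) (Fin 4) ℂ :=
  (Real.sqrt 2 : ℂ)⁻¹ •
    !![1, Complex.I, 0, 0;
       0, 0, Complex.I, 1;
       0, 0, Complex.I, -1;
       1, -Complex.I, 0, 0]

/-- The Pauli matrix `σ_y`. -/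
def sigmaY : Matrix (Fin 2) (Fin 2) ℂ := !![0, -Complex.I; Complex.I, 0]

/-- `σ = σ_y ⊗ σ_y` viewed as a `4 × 4` matrix. -/
def sigmaYY : Matrix (Fin 4) (Fin 4) ℂ :=
  Matrix.reindex qubitEquiv qubitEquiv (sigmaY ⊗ₖ sigmaY)

-- charpoly invariant under unitary conjugation
lemma charpoly_conj {n : Type*} [Fintype n] [DecidableEq n] (P A : Matrix n n ℂ)
    (h : P * Pᴴ = 1) : (Pᴴ * A * P).charpoly = A.charpoly := by
  have h' : Pᴴ * P = 1 := mul_eq_one_comm.mp h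
  have key : charmatrix (Pᴴ * A * P) =
      Pᴴ.map Polynomial.C * charmatrix A * P.map Polynomial.C := by
    simp only [charmatrix, RingHom.mapMatrix_apply]
    have hmap : (Pᴴ * A * P).map (Polynomial.C : ℂ →+* Polynomial ℂ)
        = Pᴴ.map Polynomial.C * A.map Polynomial.C * P.map Polynomial.C := by
      simp [Matrix.map_mul]
    rw [hmap, mul_sub, sub_mul]
    congr 1
    have : (Matrix.scalar n (Polynomial.X : Polynomial ℂ)) =
        (Polynomial.X : Polynomial ℂ) • (1 : Matrix n n (Polynomial ℂ)) := by
      simp [Matrix.scalar_apply, Matrix.smul_one_eq_diagonal]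
    rw [this]
    rw [Matrix.mul_smul, Matrix.mul_one, Matrix.smul_mul]
    have h1 : Pᴴ.map (Polynomial.C : ℂ →+* Polynomial ℂ) * P.map Polynomial.C = 1 := by
      rw [← Matrix.map_mul, h']; simp
    rw [h1]
  unfold Matrix.charpoly
  rw [key, Matrix.det_mul, Matrix.det_mul]
  have : (Pᴴ.map (Polynomial.C : ℂ →+* Polynomial ℂ)).det * (P.map Polynomial.C).det = 1 := by
    rw [mul_comm, ← Matrix.det_mul, ← Matrix.map_mul, h]; simp
  ring_nf
  rw [mul_comm (Pᴴ.map Polynomial.C).det, mul_assoc, this, mul_one]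

def E0 : Matrix (Fin 4) (Fin 4) ℂ :=
  !![1, Complex.I, 0, 0;
     0, 0, Complex.I, 1;
     0, 0, Complex.I, -1;
     1, -Complex.I, 0, 0]

lemma sigmaYY_eq : sigmaYY = !![0,0,0,-1; 0,0,1,0; 0,1,0,0; -1,0,0,0] := by
  ext i j
  rw [sigmaYY, Matrix.reindex_apply, Matrix.submatrix_apply]
  fin_cases i <;> fin_cases j <;>
    simp [show qubitEquiv.symm 0 = (0,0) from rfl, show qubitEquiv.symm 1 = (0,1) from rfl,
      show qubitEquiv.symm 2 = (1,0) from rfl, show qubitEquiv.symm 3 = (1,1) from rfl,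
      sigmaY, Complex.I_mul_I, Matrix.vecHead, Matrix.vecTail]

lemma hs : ((Real.sqrt 2 : ℂ))⁻¹ * ((Real.sqrt 2 : ℂ))⁻¹ = (2:ℂ)⁻¹ := by
  have h : ((Real.sqrt 2 : ℝ) : ℂ) * ((Real.sqrt 2 : ℝ) : ℂ) = 2 := by
    norm_cast
    exact Real.mul_self_sqrt (by norm_num)
  rw [← mul_inv, h]

lemma magicE_eq : magicE = ((Real.sqrt 2 : ℂ))⁻¹ • E0 := rfl

lemma starS : star (((Real.sqrt 2 : ℂ))⁻¹) = ((Real.sqrt 2 : ℂ))⁻¹ := by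
  simp

lemma E0_unitary : E0ᴴ * E0 = (2:ℂ) • 1 := by
  ext i j
  fin_cases i <;> fin_cases j <;>
    simp [E0, Matrix.mul_apply, Fin.sum_univ_four, Matrix.conjTranspose_apply,
      Matrix.one_apply, Matrix.vecHead, Matrix.vecTail] <;>
    ring_nf <;> simp [Complex.I_sq] <;> ring

lemma magicE_unitary : magicEᴴ * magicE = 1 := by
  rw [magicE_eq, Matrix.conjTranspose_smul, starS, Matrix.smul_mul, Matrix.mul_smul,
    E0_unitary, smul_smul, smul_smul, hs]
  norm_num

lemma magicE_unitary' : magicE * magicEᴴ = 1 :=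
  mul_eq_one_comm.mp magicE_unitary

lemma E0_mul_transpose : E0 * E0ᵀ = (2:ℂ) • (-sigmaYY) := by
  rw [sigmaYY_eq]
  ext i j
  fin_cases i <;> fin_cases j <;>
    simp [E0, Matrix.mul_apply, Fin.sum_univ_four, Matrix.transpose_apply,
      Matrix.vecHead, Matrix.vecTail] <;>
    ring_nf <;> simp [Complex.I_sq] <;> ring

lemma magicE_mul_transpose : magicE * magicEᵀ = -sigmaYY := by
  rw [magicE_eq, Matrix.transpose_smul, Matrix.smul_mul, Matrix.mul_smul,
    E0_mul_transpose, smul_smul, smul_smul, hs]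
  norm_num

lemma sigmaYY_sq : sigmaYY * sigmaYY = 1 := by
  rw [sigmaYY_eq]
  ext i j
  fin_cases i <;> fin_cases j <;>
    simp [Matrix.mul_apply, Fin.sum_univ_four, Matrix.one_apply,
      Matrix.vecHead, Matrix.vecTail]

lemma magicE_conj : magicEᴴᵀ = -(sigmaYY * magicE) := by
  have h := congrArg Matrix.conjTranspose magicE_mul_transpose
  rw [Matrix.conjTranspose_mul] at h
  -- (Eᵀ)ᴴ * Eᴴ = (-σ)ᴴ
  have hσ : (-sigmaYY)ᴴ = -sigmaYY := by
    rw [sigmaYY_eq]; ext i j; fin_cases i <;> fin_cases j <;>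
      simp [Matrix.conjTranspose_apply, Matrix.vecHead, Matrix.vecTail]
  rw [hσ] at h
  have h2 := congrArg (· * magicE) h
  rw [mul_assoc, magicE_unitary, mul_one] at h2
  have : magicEᵀᴴ = magicEᴴᵀ := by
    ext i j; simp
  rw [this] at h2
  rw [h2, Matrix.neg_mul]

theorem charpoly_gamma_eq_charpoly_magic_conjugate
    (u : Matrix (Fin 4) (Fin 4) ℂ) :
    (u * sigmaYY * uᵀ * sigmaYY).charpoly =
      ((magicEᴴ * u * magicE) * (magicEᴴ * u * magicE)ᵀ).charpoly := by
  have key : (magicEᴴ * u * magicE) * (magicEᴴ * u * magicE)ᵀ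
      = magicEᴴ * (u * sigmaYY * uᵀ * sigmaYY) * magicE := by
    rw [Matrix.transpose_mul, Matrix.transpose_mul]
    calc magicEᴴ * u * magicE * (magicEᵀ * (uᵀ * magicEᴴᵀ))
        = magicEᴴ * u * (magicE * magicEᵀ) * uᵀ * magicEᴴᵀ := by
          noncomm_ring
      _ = magicEᴴ * u * (-sigmaYY) * uᵀ * (-(sigmaYY * magicE)) := by
          rw [magicE_mul_transpose, magicE_conj]
      _ = magicEᴴ * (u * sigmaYY * uᵀ * sigmaYY) * magicE := by
          noncomm_ring
  rw [key, charpoly_conj _ _ magicE_unitary']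
end

section
/- Let n ≥ 1 and let m₁, m₂ be n×n complex matrices that are both unitary (mᵢ · mᵢᴴ = 1) and symmetric (mᵢᵀ = mᵢ). Then the characteristic polynomials of m₁ and m₂ are equal if and only if there exists a real n×n orthogonal matrix s (s · sᵀ = 1) such that (s.map Complex.ofReal) · m₁ · (s.map Complex.ofReal)ᵀ = m₂. -/
open Matrix Polynomial

section Aux

lemma count_eq_card {α β : Type*} [Fintype α] [DecidableEq α] [DecidableEq β] (f : α → β) (b : β) :
    Multiset.count b (Multiset.map f Finset.univ.val) = Fintype.card {i // f i = b} := by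
  rw [Multiset.count_map, Fintype.card_subtype, Finset.card, Finset.filter_val]
  congr 1
  exact Multiset.filter_congr (fun x _ => eq_comm)

lemma exists_comp_eq {α β : Type*} [Fintype α] [DecidableEq α] [DecidableEq β] (f g : α → β)
    (h : Multiset.map f Finset.univ.val = Multiset.map g Finset.univ.val) :
    ∃ σ : Equiv.Perm α, f ∘ σ = g := by
  have hcard : ∀ b, Fintype.card {i // g i = b} = Fintype.card {i // f i = b} := by
    intro b
    rw [← count_eq_card, ← count_eq_card, h]
  let e : ∀ b, {i // g i = b} ≃ {i // f i = b} := fun b => Fintype.equivOfCardEq (hcard b)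
  refine ⟨(Equiv.sigmaFiberEquiv g).symm.trans
    ((Equiv.sigmaCongrRight e).trans (Equiv.sigmaFiberEquiv f)), funext fun i => ?_⟩
  exact (e (g i) ⟨i, rfl⟩).2

variable {n : ℕ}

lemma mul_eq_diagonal_of_cols (A S : Matrix (Fin n) (Fin n) ℝ) (d : Fin n → ℝ)
    (h : ∀ j, A *ᵥ (fun i => S i j) = d j • (fun i => S i j)) :
    A * S = S * diagonal d := by
  ext i j
  have := congrFun (h j) i
  simp only [mulVec, dotProduct, Pi.smul_apply, smul_eq_mul] at this
  rw [Matrix.mul_apply, Matrix.mul_diagonal]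
  rw [this]; ring

set_option maxHeartbeats 800000 in
/-- Commuting symmetric real matrices are simultaneously diagonalizable by a real
orthogonal matrix. -/
lemma joint_diag (A B : Matrix (Fin n) (Fin n) ℝ) (hA : Aᵀ = A) (hB : Bᵀ = B)
    (hAB : A * B = B * A) :
    ∃ (S : Matrix (Fin n) (Fin n) ℝ) (dA dB : Fin n → ℝ),
      S ∈ Matrix.orthogonalGroup (Fin n) ℝ ∧
      A = S * diagonal dA * Sᵀ ∧ B = S * diagonal dB * Sᵀ := by
  have hA' : A.IsHermitian := by
    rw [Matrix.IsHermitian, Matrix.conjTranspose_eq_transpose_of_trivial]; exact hA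
  have hB' : B.IsHermitian := by
    rw [Matrix.IsHermitian, Matrix.conjTranspose_eq_transpose_of_trivial]; exact hB
  set LA := Matrix.toEuclideanLin A with hLA
  set LB := Matrix.toEuclideanLin B with hLB
  have hsA : LA.IsSymmetric := Matrix.isHermitian_iff_isSymmetric.1 hA'
  have hsB : LB.IsSymmetric := Matrix.isHermitian_iff_isSymmetric.1 hB'
  have hC : Commute LA LB := by
    show LA * LB = LB * LA
    rw [Module.End.mul_eq_comp, Module.End.mul_eq_comp, hLA, hLB,
      Matrix.toEuclideanLin_eq_toLin, ← Matrix.toLin_mul, ← Matrix.toLin_mul, hAB]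
  set V : ℝ × ℝ → Submodule ℝ (EuclideanSpace ℝ (Fin n)) :=
    fun i => Module.End.eigenspace LA i.2 ⊓ Module.End.eigenspace LB i.1 with hVdef
  have hV : DirectSum.IsInternal V :=
    LinearMap.IsSymmetric.directSum_isInternal_of_commute hsA hsB hC
  have hOF : OrthogonalFamily ℝ (fun i => V i) (fun i => (V i).subtypeₗᵢ) :=
    LinearMap.IsSymmetric.orthogonalFamily_eigenspace_inf_eigenspace hsA hsB
  letI : Fintype {i : ℝ × ℝ // V i ≠ ⊥} :=
    hV.submodule_iSupIndep.fintypeNeBotOfFiniteDimensional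
  have hV2 : DirectSum.IsInternal (fun i : {i : ℝ × ℝ // V i ≠ ⊥} => V i) :=
    DirectSum.isInternal_ne_bot_iff.mpr hV
  have hOF2 : OrthogonalFamily ℝ (fun i : {i : ℝ × ℝ // V i ≠ ⊥} => V i)
      (fun i => (V i.1).subtypeₗᵢ) := hOF.comp Subtype.coe_injective
  have hrank : Module.finrank ℝ (EuclideanSpace ℝ (Fin n)) = n := finrank_euclideanSpace_fin
  let b := hV2.subordinateOrthonormalBasis hrank hOF2
  let μ : Fin n → ℝ × ℝ := fun i => (hV2.subordinateOrthonormalBasisIndex hrank i hOF2).1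
  have hsub : ∀ i : Fin n, b i ∈ V (μ i) :=
    fun i => hV2.subordinateOrthonormalBasis_subordinate hrank i hOF2
  let S : Matrix (Fin n) (Fin n) ℝ :=
    (EuclideanSpace.basisFun (Fin n) ℝ).toBasis.toMatrix b.toBasis
  have hS : S ∈ Matrix.orthogonalGroup (Fin n) ℝ :=
    (EuclideanSpace.basisFun (Fin n) ℝ).toMatrix_orthonormalBasis_mem_unitary b
  have hScol : ∀ j, (fun i => S i j) = ⇑(b j) := fun j => rfl
  have hSo : S * Sᵀ = 1 := by
    have h := (Matrix.mem_orthogonalGroup_iff (Fin n) ℝ).mp hS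
    have h2 : star S = Sᵀ := by
      ext i j; simp [Matrix.star_apply]
    exact h
  refine ⟨S, fun i => (μ i).2, fun i => (μ i).1, hS, ?_, ?_⟩
  · have h1 : A * S = S * diagonal (fun i => (μ i).2) := by
      apply mul_eq_diagonal_of_cols
      intro j
      have h2 : LA (b j) = (μ j).2 • (b j) := Module.End.mem_eigenspace_iff.mp (hsub j).1
      rw [hScol]
      exact congrArg (WithLp.equiv 2 (Fin n → ℝ)) h2
    calc A = A * S * Sᵀ := by rw [Matrix.mul_assoc, hSo, Matrix.mul_one]
    _ = S * diagonal (fun i => (μ i).2) * Sᵀ := by rw [h1]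
  · have h1 : B * S = S * diagonal (fun i => (μ i).1) := by
      apply mul_eq_diagonal_of_cols
      intro j
      have h2 : LB (b j) = (μ j).1 • (b j) := Module.End.mem_eigenspace_iff.mp (hsub j).2
      rw [hScol]
      exact congrArg (WithLp.equiv 2 (Fin n → ℝ)) h2
    calc B = B * S * Sᵀ := by rw [Matrix.mul_assoc, hSo, Matrix.mul_one]
    _ = S * diagonal (fun i => (μ i).1) * Sᵀ := by rw [h1]

lemma charpoly_conj_orth (P M : Matrix (Fin n) (Fin n) ℂ) (h1 : P * Pᵀ = 1) :
    (P * M * Pᵀ).charpoly = M.charpoly := by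
  have h2 : Pᵀ * P = 1 := mul_eq_one_comm.mp h1
  have hcomm : Commute (scalar (Fin n) X) (P.map C) :=
    Matrix.scalar_commute X (fun a => Commute.all X a) (P.map C)
  have hc : charmatrix (P * M * Pᵀ) = P.map C * charmatrix M * Pᵀ.map C := by
    rw [charmatrix, charmatrix]
    rw [Matrix.mul_sub, Matrix.sub_mul]
    congr 1
    · rw [← hcomm.eq, Matrix.mul_assoc, ← Matrix.map_mul, h1,
        Matrix.map_one _ (by simp) (by simp), Matrix.mul_one]
    · rw [RingHom.mapMatrix_apply, RingHom.mapMatrix_apply, Matrix.map_mul, Matrix.map_mul]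
  have hdet : (P.map C).det * (Pᵀ.map C).det = 1 := by
    rw [mul_comm, ← Matrix.det_mul, ← Matrix.map_mul, h2, Matrix.map_one _ (by simp) (by simp),
      Matrix.det_one]
  rw [Matrix.charpoly, Matrix.charpoly, hc, Matrix.det_mul, Matrix.det_mul]
  calc (P.map C).det * (charmatrix M).det * (Pᵀ.map C).det
      = (P.map C).det * (Pᵀ.map C).det * (charmatrix M).det := by ring
    _ = (charmatrix M).det := by rw [hdet, one_mul]

lemma charpoly_diagonal (d : Fin n → ℂ) :
    (diagonal d).charpoly = ∏ i, (X - C (d i)) := by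
  rw [Matrix.charpoly, charmatrix, RingHom.mapMatrix_apply]
  rw [Matrix.diagonal_map (by simp), Matrix.scalar_apply, Matrix.diagonal_sub,
    Matrix.det_diagonal]

lemma map_mul_ofReal (X Y : Matrix (Fin n) (Fin n) ℝ) :
    (X * Y).map Complex.ofReal = X.map Complex.ofReal * Y.map Complex.ofReal :=
  Matrix.map_mul (f := Complex.ofRealHom)

lemma orth_mul_transpose {s : Matrix (Fin n) (Fin n) ℝ}
    (hs : s ∈ Matrix.orthogonalGroup (Fin n) ℝ) : s * sᵀ = 1 := by
  have h := (Matrix.mem_orthogonalGroup_iff (Fin n) ℝ).mp hs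
  have h2 : star s = sᵀ := by ext i j; simp [Matrix.star_apply]
  exact h

lemma orth_map_complex {s : Matrix (Fin n) (Fin n) ℝ}
    (hs : s ∈ Matrix.orthogonalGroup (Fin n) ℝ) :
    s.map Complex.ofReal * (s.map Complex.ofReal)ᵀ = 1 := by
  rw [← Matrix.transpose_map, ← map_mul_ofReal, orth_mul_transpose hs,
    Matrix.map_one _ (by simp) (by simp)]

lemma prod_fin_roots (d : Fin n → ℂ) :
    (∏ i, (X - C (d i))).roots = Multiset.map d Finset.univ.val := by
  have h := Polynomial.roots_multiset_prod_X_sub_C (Multiset.map d Finset.univ.val)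
  rw [Multiset.map_map] at h
  exact h

/-- Every symmetric unitary complex matrix is orthogonally congruent to a diagonal matrix. -/
lemma diag_form (m : Matrix (Fin n) (Fin n) ℂ)
    (hu : m ∈ Matrix.unitaryGroup (Fin n) ℂ) (hsym : mᵀ = m) :
    ∃ (S : Matrix (Fin n) (Fin n) ℝ) (d : Fin n → ℂ),
      S ∈ Matrix.orthogonalGroup (Fin n) ℝ ∧
      m = S.map Complex.ofReal * diagonal d * (S.map Complex.ofReal)ᵀ := by
  set A : Matrix (Fin n) (Fin n) ℝ := Matrix.of fun i j => (m i j).re with hAdef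
  set B : Matrix (Fin n) (Fin n) ℝ := Matrix.of fun i j => (m i j).im with hBdef
  have hsym' : ∀ i j, m j i = m i j := fun i j => congrFun (congrFun hsym i) j
  have hAs : Aᵀ = A := by
    ext i j; exact congrArg Complex.re (hsym' i j)
  have hBs : Bᵀ = B := by
    ext i j; exact congrArg Complex.im (hsym' i j)
  have hu1 : m * mᴴ = 1 := by
    have h := (Matrix.mem_unitaryGroup_iff).mp hu
    rwa [Matrix.star_eq_conjTranspose] at h
  have hcomm : A * B = B * A := by
    ext i j
    have h := congrFun (congrFun hu1 i) j
    rw [Matrix.mul_apply] at h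
    have him := congrArg Complex.im h
    rw [Complex.im_sum] at him
    simp only [Matrix.conjTranspose_apply, RCLike.star_def, Complex.mul_im, Complex.conj_re,
      Complex.conj_im, Matrix.one_apply] at him
    have him0 : ∑ k, ((m i k).re * -(m j k).im + (m i k).im * (m j k).re) = 0 := by
      rw [him]; split <;> simp
    rw [Matrix.mul_apply, Matrix.mul_apply]
    have hgoal : ∀ k, A i k * B k j = (m i k).re * (m j k).im := by
      intro k; rw [hAdef, hBdef]; simp [Matrix.of_apply, hsym' j k]
    have hgoal2 : ∀ k, B i k * A k j = (m i k).im * (m j k).re := by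
      intro k; rw [hAdef, hBdef]; simp [Matrix.of_apply, hsym' j k]
    simp only [hgoal, hgoal2]
    have hsub : (∑ k, (m i k).im * (m j k).re) - (∑ k, (m i k).re * (m j k).im) = 0 := by
      rw [← Finset.sum_sub_distrib, ← him0]
      congr 1; funext k; ring
    linarith
  have hm : m = A.map Complex.ofReal + Complex.I • B.map Complex.ofReal := by
    ext i j
    simp only [Matrix.add_apply, Matrix.smul_apply, Matrix.map_apply, hAdef, hBdef,
      Matrix.of_apply, smul_eq_mul]
    apply Complex.ext <;> simp
  obtain ⟨S, dA, dB, hS, hA2, hB2⟩ := joint_diag A B hAs hBs hcomm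
  refine ⟨S, fun i => (dA i : ℂ) + (dB i : ℂ) * Complex.I, hS, ?_⟩
  have hdiag : diagonal (fun i => (dA i : ℂ) + (dB i : ℂ) * Complex.I)
      = (diagonal dA).map Complex.ofReal + Complex.I • (diagonal dB).map Complex.ofReal := by
    ext i j
    rcases eq_or_ne i j with rfl | hij
    · simp [Matrix.diagonal_apply_eq, mul_comm]
    · simp [Matrix.diagonal_apply_ne _ hij, hij]
  have htr : (S.map Complex.ofReal)ᵀ = Sᵀ.map Complex.ofReal := (Matrix.transpose_map).symm
  rw [hdiag, htr]
  conv_lhs => rw [hm, hA2, hB2]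
  rw [map_mul_ofReal, map_mul_ofReal, map_mul_ofReal, map_mul_ofReal]
  rw [Matrix.mul_add, Matrix.add_mul, mul_smul_comm, smul_mul_assoc]

end Aux

theorem symmetric_unitary_orthogonal_congruence_iff_charpoly
    (n : ℕ) (hn : 1 ≤ n) (m₁ m₂ : Matrix (Fin n) (Fin n) ℂ)
    (h₁ : m₁ ∈ Matrix.unitaryGroup (Fin n) ℂ)
    (h₂ : m₂ ∈ Matrix.unitaryGroup (Fin n) ℂ)
    (hs₁ : m₁ᵀ = m₁) (hs₂ : m₂ᵀ = m₂) :
    m₁.charpoly = m₂.charpoly ↔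
      ∃ s : Matrix (Fin n) (Fin n) ℝ,
        s ∈ Matrix.orthogonalGroup (Fin n) ℝ ∧
        s.map Complex.ofReal * m₁ * (s.map Complex.ofReal)ᵀ = m₂ := by
  constructor
  · intro hchar
    obtain ⟨S₁, d₁, hS₁, hm₁⟩ := diag_form m₁ h₁ hs₁
    obtain ⟨S₂, d₂, hS₂, hm₂⟩ := diag_form m₂ h₂ hs₂
    let Q₁ := S₁.map Complex.ofReal
    let Q₂ := S₂.map Complex.ofReal
    have hQ₁ : Q₁ * Q₁ᵀ = 1 := orth_map_complex hS₁
    have hQ₂ : Q₂ * Q₂ᵀ = 1 := orth_map_complex hS₂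
    have hQ₁' : Q₁ᵀ * Q₁ = 1 := mul_eq_one_comm.mp hQ₁
    have hc1 : m₁.charpoly = (diagonal d₁).charpoly := by
      rw [hm₁]; exact charpoly_conj_orth _ _ hQ₁
    have hc2 : m₂.charpoly = (diagonal d₂).charpoly := by
      rw [hm₂]; exact charpoly_conj_orth _ _ hQ₂
    have hprod : (∏ i, (X - C (d₁ i))) = ∏ i, (X - C (d₂ i)) := by
      rw [← _root_.charpoly_diagonal, ← _root_.charpoly_diagonal, ← hc1, ← hc2, hchar]
    have hmult : Multiset.map d₁ Finset.univ.val = Multiset.map d₂ Finset.univ.val := by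
      have h5 := congrArg Polynomial.roots hprod
      rwa [prod_fin_roots, prod_fin_roots] at h5
    obtain ⟨σ, hσ⟩ := exists_comp_eq d₁ d₂ hmult
    set Pr : Matrix (Fin n) (Fin n) ℝ := (1 : Matrix (Fin n) (Fin n) ℝ).submatrix σ id with hPrdef
    have hPrT : Prᵀ = (1 : Matrix (Fin n) (Fin n) ℝ).submatrix id σ := by
      rw [hPrdef, Matrix.transpose_submatrix, Matrix.transpose_one]
    have hPro : Pr ∈ Matrix.orthogonalGroup (Fin n) ℝ := by
      rw [Matrix.mem_orthogonalGroup_iff]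
      have h2 : star Pr = Prᵀ := by ext i j; simp [Matrix.star_apply]
      rw [hPrT, hPrdef]
      have := Matrix.submatrix_mul_equiv (1 : Matrix (Fin n) (Fin n) ℝ)
        (1 : Matrix (Fin n) (Fin n) ℝ) σ (Equiv.refl (Fin n)) σ
      simp only [Equiv.coe_refl] at this
      rw [this, one_mul, Matrix.submatrix_one_equiv]
    set Pc : Matrix (Fin n) (Fin n) ℂ := (1 : Matrix (Fin n) (Fin n) ℂ).submatrix σ id with hPcdef
    have hPcmap : Pr.map Complex.ofReal = Pc := by
      ext i j
      simp only [hPrdef, hPcdef, Matrix.map_apply, Matrix.submatrix_apply, Matrix.one_apply,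
        id_eq]
      split <;> simp
    have hPdiag : Pc * diagonal d₁ * Pcᵀ = diagonal d₂ := by
      have e1 : Pc * diagonal d₁ = (diagonal d₁).submatrix σ id := by
        have := Matrix.submatrix_mul_equiv (1 : Matrix (Fin n) (Fin n) ℂ)
          (diagonal d₁) σ (Equiv.refl (Fin n)) id
        simp only [Equiv.coe_refl, Matrix.submatrix_id_id] at this
        rw [hPcdef, this, one_mul]
      have e2 : Pcᵀ = (1 : Matrix (Fin n) (Fin n) ℂ).submatrix id σ := by
        rw [hPcdef, Matrix.transpose_submatrix, Matrix.transpose_one]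
      have e3 : (diagonal d₁).submatrix σ id * (1 : Matrix (Fin n) (Fin n) ℂ).submatrix id σ
          = (diagonal d₁).submatrix σ σ := by
        have := Matrix.submatrix_mul_equiv (diagonal d₁)
          (1 : Matrix (Fin n) (Fin n) ℂ) σ (Equiv.refl (Fin n)) σ
        simp only [Equiv.coe_refl] at this
        rw [this, mul_one]
      rw [e1, e2, e3, Matrix.submatrix_diagonal_equiv]
      rw [show d₁ ∘ σ = d₂ from hσ]
    refine ⟨S₂ * Pr * S₁ᵀ, ?_, ?_⟩
    · have hst : star S₁ = S₁ᵀ := by ext i j; simp [Matrix.star_apply]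
      exact mul_mem (mul_mem hS₂ hPro) (hst ▸ Unitary.star_mem hS₁)
    · have hsmap : (S₂ * Pr * S₁ᵀ).map Complex.ofReal = Q₂ * Pc * Q₁ᵀ := by
        rw [map_mul_ofReal, map_mul_ofReal, hPcmap, Matrix.transpose_map]
      rw [hsmap, hm₁, hm₂]
      rw [Matrix.transpose_mul, Matrix.transpose_mul, Matrix.transpose_transpose]
      rw [← hPdiag]
      simp only [← Matrix.mul_assoc]
      rw [Matrix.mul_assoc _ Q₁ᵀ Q₁, hQ₁', Matrix.mul_one,
        Matrix.mul_assoc _ Q₁ᵀ Q₁, hQ₁', Matrix.mul_one]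
  · rintro ⟨s, hso, hs⟩
    have h1 : s.map Complex.ofReal * (s.map Complex.ofReal)ᵀ = 1 := orth_map_complex hso
    rw [← hs]
    exact (charpoly_conj_orth _ _ h1).symm
end

section
/- Let f : ℕ → ℝ satisfy f 2 ≤ 2 and f n ≤ 4 · f (n−1) + 3 · 2^(n−1) − 2 for all n ≥ 3. Then for all n ≥ 2, f n ≤ (11/24) · 4^n − (3/2) · 2^n + 2/3. -/
theorem cnot_count_unitary_up_to_diagonal (f : ℕ → ℝ)
    (hbase : f 2 ≤ 2)
    (hrec : ∀ n, 3 ≤ n → f n ≤ 4 * f (n - 1) + 3 * 2 ^ (n - 1) - 2) :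
    ∀ n, 2 ≤ n → f n ≤ (11 / 24 : ℝ) * 4 ^ n - (3 / 2 : ℝ) * 2 ^ n + 2 / 3 := by
  intro n hn
  induction n, hn using Nat.le_induction with
  | base => norm_num; linarith
  | succ m hm ih =>
    have h := hrec (m + 1) (by omega)
    simp only [Nat.add_sub_cancel] at h
    calc f (m + 1) ≤ 4 * f m + 3 * 2 ^ m - 2 := h
      _ ≤ 4 * ((11 / 24 : ℝ) * 4 ^ m - (3 / 2 : ℝ) * 2 ^ m + 2 / 3) + 3 * 2 ^ m - 2 := by
          linarith
      _ = (11 / 24 : ℝ) * 4 ^ (m + 1) - (3 / 2 : ℝ) * 2 ^ (m + 1) + 2 / 3 := by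
          ring
end

section
/- Let N ≥ 1, let K ≤ N, and let A be an N×N complex matrix with rank A ≤ K and spectral norm (L2 operator norm) at most 1. Then there exist N×N unitary matrices W and V and θ : Fin N → ℝ such that A = W · diagonal (fun i => (Real.cos (θ i) : ℂ)) · Vᴴ, the set { i : Real.cos (θ i) ≠ 0 } has at most K elements, and moreover the matrices A₁ = W · diagonal (fun i => exp (i·θ i)) · Vᴴ and A₂ = W · diagonal (fun i => exp (−i·θ i)) · Vᴴ are unitary and satisfy A = (A₁ + A₂)/2. -/
open Matrix


noncomputable section

namespace LowRankAux

open scoped ComplexOrder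

set_option maxHeartbeats 1000000 in
/-- SVD existence. -/
lemma svd (N : ℕ) (A : Matrix (Fin N) (Fin N) ℂ)
    (hA : ‖Matrix.toEuclideanCLM (𝕜 := ℂ) A‖ ≤ 1) :
    ∃ (W V : Matrix (Fin N) (Fin N) ℂ) (σ : Fin N → ℝ),
      W ∈ Matrix.unitaryGroup (Fin N) ℂ ∧
      V ∈ Matrix.unitaryGroup (Fin N) ℂ ∧
      A = W * Matrix.diagonal (fun i => (σ i : ℂ)) * Vᴴ ∧
      (∀ i, 0 ≤ σ i) ∧ (∀ i, σ i ≤ 1) ∧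
      ({i : Fin N | σ i ≠ 0}).ncard = A.rank := by
  classical
  have hB : (Aᴴ * A).IsHermitian := Matrix.isHermitian_conjTranspose_mul_self A
  set lam : Fin N → ℝ := hB.eigenvalues with hlamdef
  have hlam0 : ∀ i, 0 ≤ lam i := Matrix.eigenvalues_conjTranspose_mul_self_nonneg A
  set σ : Fin N → ℝ := fun i => Real.sqrt (lam i) with hσdef
  have hσ0 : ∀ i, 0 ≤ σ i := fun i => Real.sqrt_nonneg _
  have hσsq : ∀ i, σ i ^ 2 = lam i := fun i => Real.sq_sqrt (hlam0 i)
  set v : Fin N → EuclideanSpace ℂ (Fin N) := fun j => hB.eigenvectorBasis j with hvdef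
  set Av : Fin N → EuclideanSpace ℂ (Fin N) :=
    fun j => (WithLp.equiv 2 _).symm (A *ᵥ ⇑(v j)) with hAvdef
  -- inner products of the images
  have hAv_inner : ∀ i j, (inner ℂ (Av i) (Av j) : ℂ) = (lam j : ℂ) * (inner ℂ (v i) (v j) : ℂ) := by
    intro i j
    rw [hAvdef]
    simp only
    rw [WithLp.equiv_symm_apply, EuclideanSpace.inner_toLp_toLp, dotProduct_comm, Matrix.star_mulVec,
      ← Matrix.dotProduct_mulVec, Matrix.mulVec_mulVec, hB.mulVec_eigenvectorBasis j]
    rw [EuclideanSpace.inner_eq_star_dotProduct, dotProduct_comm (v j).ofLp]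
    rw [dotProduct_smul]
    norm_cast
  have hvon : ∀ i j, (inner ℂ (v i) (v j) : ℂ) = if i = j then 1 else 0 :=
    orthonormal_iff_ite.mp hB.eigenvectorBasis.orthonormal
  -- norm of Av j
  have hAvnormR : ∀ j, lam j = ‖Av j‖ ^ 2 := by
    intro j
    have h := hAv_inner j j
    rw [hvon, if_pos rfl, mul_one, inner_self_eq_norm_sq_to_K (𝕜 := ℂ)] at h
    have h2 : ((lam j : ℝ) : ℂ) = ((‖Av j‖ ^ 2 : ℝ) : ℂ) := by push_cast; exact h.symm
    exact_mod_cast h2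
  have hlam1 : ∀ j, lam j ≤ 1 := by
    intro j
    rw [hAvnormR j]
    have h1 : Av j = Matrix.toEuclideanCLM (𝕜 := ℂ) A (v j) := by
      rfl
    have h2 : ‖Av j‖ ≤ 1 := by
      rw [h1]
      calc ‖Matrix.toEuclideanCLM (𝕜 := ℂ) A (v j)‖
          ≤ ‖Matrix.toEuclideanCLM (𝕜 := ℂ) A‖ * ‖v j‖ :=
            (Matrix.toEuclideanCLM (𝕜 := ℂ) A).le_opNorm _
        _ ≤ 1 * 1 := by
            apply mul_le_mul hA (le_of_eq (hB.eigenvectorBasis.orthonormal.1 j))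
              (norm_nonneg _) zero_le_one
        _ = 1 := one_mul 1
    calc ‖Av j‖ ^ 2 ≤ 1 ^ 2 := by
          apply pow_le_pow_left₀ (norm_nonneg _) h2
      _ = 1 := one_pow 2
  have hσ1 : ∀ i, σ i ≤ 1 := by
    intro i
    rw [hσdef]
    simpa using Real.sqrt_le_sqrt (hlam1 i)
  -- the left singular vectors on {lam ≠ 0}
  set S : Set (Fin N) := {j | lam j ≠ 0} with hSdef
  set u : Fin N → EuclideanSpace ℂ (Fin N) := fun j => ((σ j : ℂ))⁻¹ • Av j with hudef
  have hσne : ∀ j ∈ S, σ j ≠ 0 := by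
    intro j hj
    simp only [hσdef]
    exact Real.sqrt_ne_zero'.mpr (lt_of_le_of_ne (hlam0 j) (Ne.symm hj))
  have huon : Orthonormal ℂ (S.restrict u) := by
    rw [orthonormal_iff_ite]
    rintro ⟨i, hi⟩ ⟨j, hj⟩
    simp only [Set.restrict, Set.domRestrict_apply, hudef]
    rw [inner_smul_left, inner_smul_right, hAv_inner, hvon]
    rcases eq_or_ne i j with rfl | hij
    · simp only [if_pos rfl, mul_one]
      rw [map_inv₀, Complex.conj_ofReal]
      have hσi : (σ i : ℂ) ≠ 0 := by exact_mod_cast hσne i hi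
      have hl : (lam i : ℂ) = (σ i : ℂ) ^ 2 := by exact_mod_cast (hσsq i).symm
      rw [hl, sq]
      field_simp
    · have hne : (⟨i, hi⟩ : S) ≠ ⟨j, hj⟩ := fun h => hij (congrArg Subtype.val h)
      rw [if_neg hij, if_neg hne, mul_zero, mul_zero, mul_zero]
  obtain ⟨b, hb⟩ := huon.exists_orthonormalBasis_extension_of_card_eq
    finrank_euclideanSpace
  -- matrices
  set W : Matrix (Fin N) (Fin N) ℂ :=
    (EuclideanSpace.basisFun (Fin N) ℂ).toBasis.toMatrix b.toBasis with hWdef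
  have hW : W ∈ Matrix.unitaryGroup (Fin N) ℂ :=
    (EuclideanSpace.basisFun (Fin N) ℂ).toMatrix_orthonormalBasis_mem_unitary b
  have hWapp : ∀ i j, W i j = b j i := fun i j => rfl
  set V : Matrix (Fin N) (Fin N) ℂ := (hB.eigenvectorUnitary : Matrix (Fin N) (Fin N) ℂ)
    with hVdef
  have hV : V ∈ Matrix.unitaryGroup (Fin N) ℂ := hB.eigenvectorUnitary.2
  have hVapp : ∀ i j, V i j = v j i := fun i j => rfl
  -- key identity A * V = W * diagonal σ
  have key : A * V = W * Matrix.diagonal (fun i => (σ i : ℂ)) := by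
    ext r j
    rw [Matrix.mul_diagonal]
    have hL : (A * V) r j = (A *ᵥ ⇑(v j)) r := by
      simp only [Matrix.mul_apply, Matrix.mulVec, dotProduct]
      rfl
    rw [hL, hWapp]
    rcases eq_or_ne (lam j) 0 with h0 | h0
    · have hσj : σ j = 0 := by rw [hσdef]; simp [h0]
      have hAv0 : Av j = 0 := by
        rw [← norm_eq_zero]
        have := hAvnormR j
        rw [h0] at this
        nlinarith [norm_nonneg (Av j)]
      have : (A *ᵥ ⇑(v j)) r = 0 := by
        have := congrFun (congrArg (WithLp.equiv 2 _) hAv0) r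
        simpa [hAvdef] using this
      rw [this, hσj]
      simp
    · have hjS : j ∈ S := h0
      rw [hb j hjS, hudef]
      simp only [PiLp.smul_apply, smul_eq_mul]
      have hσj : (σ j : ℂ) ≠ 0 := by exact_mod_cast hσne j hjS
      have hAvr : Av j r = (A *ᵥ ⇑(v j)) r := rfl
      rw [hAvr]
      field_simp
  have hAeq : A = W * Matrix.diagonal (fun i => (σ i : ℂ)) * Vᴴ := by
    have hVV : V * Vᴴ = 1 := by
      rw [← Matrix.star_eq_conjTranspose]
      exact (Matrix.mem_unitaryGroup_iff).mp hV
    calc A = A * (V * Vᴴ) := by rw [hVV, mul_one]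
      _ = (A * V) * Vᴴ := by rw [mul_assoc]
      _ = W * Matrix.diagonal (fun i => (σ i : ℂ)) * Vᴴ := by rw [key]
  -- rank count
  have hcount : ({i : Fin N | σ i ≠ 0}).ncard = A.rank := by
    have hset : {i : Fin N | σ i ≠ 0} = {i : Fin N | lam i ≠ 0} := by
      ext i
      simp only [Set.mem_setOf_eq, hσdef]
      rw [Real.sqrt_ne_zero' ]
      constructor
      · intro h; exact ne_of_gt h
      · intro h; exact lt_of_le_of_ne (hlam0 i) (Ne.symm h)
    rw [hset]
    have h1 : ({i : Fin N | lam i ≠ 0}).ncard = Fintype.card {i // lam i ≠ 0} := by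
      rw [Set.ncard_eq_toFinset_card', Set.toFinset_card]
      exact Fintype.card_congr (Equiv.subtypeEquivRight fun _ => Iff.rfl)
    rw [h1]
    have h2 : Fintype.card {i // lam i ≠ 0} = (Aᴴ * A).rank := hB.rank_eq_card_non_zero_eigs.symm
    rw [h2, Matrix.rank_conjTranspose_mul_self]
  exact ⟨W, V, σ, hW, hV, hAeq, hσ0, hσ1, hcount⟩

lemma exp_add_exp (t : ℝ) :
    Complex.exp (Complex.I * t) + Complex.exp (-(Complex.I) * t) = 2 * (Real.cos t : ℂ) := by
  rw [mul_comm Complex.I (t:ℂ),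
    show -(Complex.I) * (t:ℂ) = ((-t : ℝ) : ℂ) * Complex.I by push_cast; ring,
    Complex.exp_mul_I, Complex.exp_mul_I]
  push_cast
  simp [Complex.cos_ofReal_re, Complex.ofReal_cos]
  ring_nf

lemma exp_unit (c : ℂ) (hc : (starRingEnd ℂ) c = -c) (t : ℝ) :
    Complex.exp (c * t) * star (Complex.exp (c * t)) = 1 := by
  have h : star (Complex.exp (c * t)) = Complex.exp (-(c * t)) := by
    rw [RCLike.star_def, ← Complex.exp_conj, _root_.map_mul, hc, Complex.conj_ofReal, neg_mul]
  rw [h, ← Complex.exp_add, add_neg_cancel, Complex.exp_zero]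

lemma diag_unitary {N : ℕ} (d : Fin N → ℂ) (hd : ∀ i, d i * star (d i) = 1) :
    Matrix.diagonal d ∈ Matrix.unitaryGroup (Fin N) ℂ := by
  rw [Matrix.mem_unitaryGroup_iff, Matrix.star_eq_conjTranspose, Matrix.diagonal_conjTranspose,
    Matrix.diagonal_mul_diagonal, ← Matrix.diagonal_one]
  exact congrArg Matrix.diagonal (funext hd)

end LowRankAux



theorem low_rank_two_unitary_decomposition (N K : ℕ) (hN : 1 ≤ N) (hK : K ≤ N)
    (A : Matrix (Fin N) (Fin N) ℂ)
    (hrank : A.rank ≤ K)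
    (hA : ‖Matrix.toEuclideanCLM (𝕜 := ℂ) A‖ ≤ 1) :
    ∃ (W V : Matrix (Fin N) (Fin N) ℂ) (θ : Fin N → ℝ),
      W ∈ Matrix.unitaryGroup (Fin N) ℂ ∧
      V ∈ Matrix.unitaryGroup (Fin N) ℂ ∧
      A = W * Matrix.diagonal (fun i => (Real.cos (θ i) : ℂ)) * Vᴴ ∧
      ({i : Fin N | Real.cos (θ i) ≠ 0}).ncard ≤ K ∧
      W * Matrix.diagonal (fun i => Complex.exp (Complex.I * (θ i : ℂ))) * Vᴴ ∈
        Matrix.unitaryGroup (Fin N) ℂ ∧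
      W * Matrix.diagonal (fun i => Complex.exp (-(Complex.I) * (θ i : ℂ))) * Vᴴ ∈
        Matrix.unitaryGroup (Fin N) ℂ ∧
      A = (1 / 2 : ℂ) •
        (W * Matrix.diagonal (fun i => Complex.exp (Complex.I * (θ i : ℂ))) * Vᴴ +
         W * Matrix.diagonal (fun i => Complex.exp (-(Complex.I) * (θ i : ℂ))) * Vᴴ) := by

  classical
  obtain ⟨W, V, σ, hW, hV, hAeq, hσ0, hσ1, hcount⟩ := LowRankAux.svd N A hA
  set θ : Fin N → ℝ := fun i => Real.arccos (σ i) with hθdef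
  have hcos : ∀ i, Real.cos (θ i) = σ i := fun i =>
    Real.cos_arccos (le_trans (by norm_num) (hσ0 i)) (hσ1 i)
  have hVH : Vᴴ ∈ Matrix.unitaryGroup (Fin N) ℂ := by
    rw [← Matrix.star_eq_conjTranspose]
    exact Unitary.star_mem hV
  have hA3 : A = W * Matrix.diagonal (fun i => (Real.cos (θ i) : ℂ)) * Vᴴ := by
    have : (fun i => (Real.cos (θ i) : ℂ)) = fun i => (σ i : ℂ) := by
      funext i; rw [hcos]
    rw [this]; exact hAeq
  have hDp : Matrix.diagonal (fun i => Complex.exp (Complex.I * (θ i : ℂ)))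
      ∈ Matrix.unitaryGroup (Fin N) ℂ :=
    LowRankAux.diag_unitary _ fun i =>
      LowRankAux.exp_unit Complex.I (by simp) (θ i)
  have hDm : Matrix.diagonal (fun i => Complex.exp (-(Complex.I) * (θ i : ℂ)))
      ∈ Matrix.unitaryGroup (Fin N) ℂ :=
    LowRankAux.diag_unitary _ fun i =>
      LowRankAux.exp_unit (-(Complex.I)) (by simp) (θ i)
  refine ⟨W, V, θ, hW, hV, hA3, ?_, mul_mem (mul_mem hW hDp) hVH,
    mul_mem (mul_mem hW hDm) hVH, ?_⟩
  · have hsets : {i : Fin N | Real.cos (θ i) ≠ 0} = {i : Fin N | σ i ≠ 0} := by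
      ext i; simp [hcos i]
    rw [hsets, hcount]
    exact hrank
  · have hcomb : W * Matrix.diagonal (fun i => Complex.exp (Complex.I * (θ i : ℂ))) * Vᴴ +
        W * Matrix.diagonal (fun i => Complex.exp (-(Complex.I) * (θ i : ℂ))) * Vᴴ =
        W * (Matrix.diagonal (fun i => Complex.exp (Complex.I * (θ i : ℂ))) +
          Matrix.diagonal (fun i => Complex.exp (-(Complex.I) * (θ i : ℂ)))) * Vᴴ := by
      rw [mul_add, add_mul]
    rw [hcomb, Matrix.diagonal_add, ← Matrix.smul_mul, ← Matrix.mul_smul, ← Matrix.diagonal_smul]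
    have hd : ((1 / 2 : ℂ) • fun i =>
        Complex.exp (Complex.I * (θ i : ℂ)) + Complex.exp (-(Complex.I) * (θ i : ℂ))) =
        fun i => (Real.cos (θ i) : ℂ) := by
      funext i
      simp only [Pi.smul_apply, smul_eq_mul]
      rw [LowRankAux.exp_add_exp (θ i)]
      ring
    rw [hd]
    exact hA3

end
end
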